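/- arXiv:2101.08556 — 4 statements merged into one kernel-verified Lean document; each statement's English description precedes it below -/
import Mathlib

section
/- Suppose that B satisfies condition (WT) and that I(B) is a set of local units for A. Let e ∈ I(B) and n ∈ N(B) with dagger n†. Then n − n·e ∈ N(B) with dagger n† − e·n†, and n − e·n ∈ N(B) with dagger n† − n†·e; moreover n†·n − n†·n·e ∈ I(B) and n − n·e = n·(n†·n − n†·n·e), so that n − n·e ≤ n, and similarly n − e·n ≤ n. -/
namespace QCP

variable {R : Type*} [CommRing R] {A : Type*} [NonUnitalRing A]
  [Module R A] [SMulCommClass R A A] [IsScalarTower R A A]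

/-- `e` is an idempotent element of the subalgebra `B`, i.e. `e ∈ I(B)`. -/
def IsIdem (B : NonUnitalSubalgebra R A) (e : A) : Prop :=
  e ∈ B ∧ e * e = e

/-- The idempotents of `B` form a set of local units for `A`. -/
def HasLocalUnits (B : NonUnitalSubalgebra R A) : Prop :=
  ∀ F : Finset A, ∃ e : A, IsIdem B e ∧ ∀ a ∈ F, e * a = a ∧ a * e = a

/-- `k` is a dagger for `n` relative to `B`. -/
def IsDagger (B : NonUnitalSubalgebra R A) (n k : A) : Prop :=
  k * n * k = k ∧ n * k * n = n ∧ ∀ b ∈ B, k * b * n ∈ B ∧ n * b * k ∈ B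

/-- `n` belongs to the normaliser `N(B)` of `B` in `A`. -/
def MemNormaliser (B : NonUnitalSubalgebra R A) (n : A) : Prop :=
  ∃ k : A, IsDagger B n k

/-- Condition (WT): `B` is without torsion. -/
def CondWT (B : NonUnitalSubalgebra R A) : Prop :=
  ∀ e : A, e ∈ B → e * e = e → ∀ t : R, t • e = 0 → t = 0 ∨ e = 0

/-- The partial order on `N(B)`: `m ≤ n` iff `m = n·e` for some `e ∈ I(B)`. -/
def NormLE (B : NonUnitalSubalgebra R A) (m n : A) : Prop :=
  ∃ e : A, IsIdem B e ∧ m = n * e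

/-- A filter of `N(B)`. -/
def IsFilterOf (B : NonUnitalSubalgebra R A) (U : Set A) : Prop :=
  (∀ n ∈ U, MemNormaliser B n) ∧ (0 : A) ∉ U ∧
    (∀ m ∈ U, ∀ n : A, MemNormaliser B n → NormLE B m n → n ∈ U) ∧
    (∀ m ∈ U, ∀ n ∈ U, ∃ p ∈ U, NormLE B p m ∧ NormLE B p n)

/-- An ultrafilter of `N(B)`: a filter maximal among filters under inclusion. -/
def IsUltrafilterOf (B : NonUnitalSubalgebra R A) (U : Set A) : Prop :=
  IsFilterOf B U ∧ ∀ V : Set A, IsFilterOf B V → U ⊆ V → U = V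

/-- `P` is a conditional expectation from `A` onto `B`. -/
def IsCondExp (B : NonUnitalSubalgebra R A) (P : A →ₗ[R] A) : Prop :=
  (∀ a : A, P a ∈ B) ∧ (∀ b ∈ B, P b = b) ∧
    (∀ a : A, ∀ b ∈ B, ∀ b' ∈ B, P (b * a * b') = b * P a * b')

/-- The conditional expectation `P` is faithful. -/
def IsFaithful (B : NonUnitalSubalgebra R A) (P : A →ₗ[R] A) : Prop :=
  ∀ a : A, a ≠ 0 → ∃ n : A, MemNormaliser B n ∧ P (n * a) ≠ 0

/-- The conditional expectation `P` is implemented by idempotents. -/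
def ImplementedByIdem (B : NonUnitalSubalgebra R A) (P : A →ₗ[R] A) : Prop :=
  ∀ n : A, MemNormaliser B n → ∃ e : A, IsIdem B e ∧ P n = n * e ∧ P n = e * n

/-- `(A, B)` is an algebraic pair: `B` is commutative, satisfies (WT), `I(B)` is a set of
local units for `A`, `B` is spanned by `I(B)`, `A` is spanned by `N(B)`, and there is a
faithful conditional expectation `A → B`. -/
def IsAlgebraicPair (B : NonUnitalSubalgebra R A) : Prop :=
  (∀ x ∈ B, ∀ y ∈ B, x * y = y * x) ∧ CondWT B ∧ HasLocalUnits B ∧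
    (B : Set A) = (Submodule.span R {e : A | IsIdem B e} : Set A) ∧
    Submodule.span R {n : A | MemNormaliser B n} = ⊤ ∧
    ∃ P : A →ₗ[R] A, IsCondExp B P ∧ IsFaithful B P

/-- A free normaliser: an element of `N(B)` that lies in `B` or squares to zero. -/
def IsFreeNormaliser (B : NonUnitalSubalgebra R A) (n : A) : Prop :=
  MemNormaliser B n ∧ (n ∈ B ∨ n * n = 0)

/-- `(A, B)` is an algebraic diagonal pair. -/
def IsDiagonalPair (B : NonUnitalSubalgebra R A) : Prop :=
  IsAlgebraicPair B ∧ Submodule.span R {n : A | IsFreeNormaliser B n} = ⊤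

/-- `(A, B)` is an algebraic Cartan pair: `B` is a maximal commutative subalgebra. -/
def IsCartanPair (B : NonUnitalSubalgebra R A) : Prop :=
  IsAlgebraicPair B ∧ ∀ a : A, (∀ b ∈ B, a * b = b * a) → a ∈ B

/-- `(A, B)` is an algebraic quasi-Cartan pair. -/
def IsQuasiCartanPair (B : NonUnitalSubalgebra R A) : Prop :=
  IsAlgebraicPair B ∧
    ∃ P : A →ₗ[R] A, IsCondExp B P ∧ IsFaithful B P ∧ ImplementedByIdem B P

end QCP

/-!
If `k` is a dagger for `n` and `f ∈ I(B)` commutes with `k·n`, then `f·k` is a dagger for `n·f`.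
Local units put the idempotents `k·n` and `n·k` into `B`, where they commute with `e`; taking
`f = k·n − k·n·e` gives `n·f = n − n·e` and `f·k = k − e·k`. Since the dagger relation is
symmetric, the same argument for the pair `(k, n)` with `f = n·k − n·k·e` handles `n − e·n`.
-/

namespace QCP

variable {R : Type*} [CommRing R] {A : Type*} [NonUnitalRing A]
  [Module R A] {B : NonUnitalSubalgebra R A} {n k f : A}

theorem IsDagger.symm (hk : IsDagger B n k) : IsDagger B k n :=
  ⟨hk.2.1, hk.1, fun b hb => (hk.2.2 b hb).symm⟩

theorem IsDagger.isIdempotentElem_mul (hk : IsDagger B n k) : IsIdempotentElem (k * n) := by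
  rw [IsIdempotentElem, ← mul_assoc, hk.1]

theorem IsDagger.mul_mem_of_hasLocalUnits (hlu : HasLocalUnits B) (hk : IsDagger B n k) :
    k * n ∈ B := by
  obtain ⟨u, ⟨huB, -⟩, hu⟩ := hlu {k}
  simpa only [(hu k (Finset.mem_singleton_self k)).2] using (hk.2.2 u huB).1

theorem IsDagger.mul_idem (hk : IsDagger B n k) (hf : IsIdem B f) (hfc : Commute f (k * n)) :
    IsDagger B (n * f) (f * k) := by
  obtain ⟨hk₁, hk₂, hkB⟩ := hk
  obtain ⟨hfB, hfi : IsIdempotentElem f⟩ := hf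
  refine ⟨?_, ?_, fun b hb => ⟨?_, ?_⟩⟩
  · calc f * k * (n * f) * (f * k) = f * (k * n) * f * k := by
          simp only [mul_assoc, hfi.mul_self_mul]
      _ = f * k := by
          rw [hfc.eq, hfi.mul_mul_self, ← hfc.eq, mul_assoc f (k * n) k, hk₁]
  · calc n * f * (f * k) * (n * f) = n * (f * (k * n)) * f := by
          simp only [mul_assoc, hfi.mul_self_mul]
      _ = n * f := by
          rw [hfc.eq, ← mul_assoc n (k * n) f, ← mul_assoc n k n, hk₂, hfi.mul_mul_self]
  · simpa only [mul_assoc] using mul_mem (mul_mem hfB (hkB b hb).1) hfB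
  · simpa only [mul_assoc] using (hkB _ (mul_mem (mul_mem hfB hb) hfB)).2

theorem IsDagger.idem_mul (hk : IsDagger B n k) (hf : IsIdem B f) (hfc : Commute f (n * k)) :
    IsDagger B (f * n) (k * f) :=
  (hk.symm.mul_idem hf hfc).symm

theorem normLE_mul_idem (hf : IsIdem B f) : NormLE B (n * f) n :=
  ⟨f, hf, rfl⟩

theorem IsDagger.normLE_idem_mul (hk : IsDagger B n k) (hf : IsIdem B f)
    (hfc : Commute f (n * k)) : NormLE B (f * n) n := by
  refine ⟨k * f * n, ⟨(hk.2.2 f hf.1).1, ?_⟩, ?_⟩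
  · calc k * f * n * (k * f * n) = k * (f * (n * k) * f) * n := by simp only [mul_assoc]
      _ = k * f * n := by
          rw [hfc.eq, IsIdempotentElem.mul_mul_self hf.2, ← mul_assoc k (n * k) f,
            ← mul_assoc k n k, hk.1]
  · calc f * n = f * (n * k * n) := by rw [hk.2.1]
      _ = n * (k * f * n) := by rw [← mul_assoc, hfc.eq]; simp only [mul_assoc]

theorem isIdem_sub_mul {p e : A} (hp : IsIdem B p) (he : IsIdem B e) (hpe : Commute p e) :
    IsIdem B (p - p * e) := by
  refine ⟨sub_mem hp.1 (mul_mem hp.1 he.1), ?_⟩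
  refine (IsIdempotentElem.mul_of_commute hpe hp.2 he.2).sub hp.2 ?_ ?_
  · rw [mul_assoc, ← hpe.eq, ← mul_assoc, hp.2]
  · rw [← mul_assoc, hp.2]

end QCP

theorem normaliser_sub_mul_idem_general {R : Type*} [CommRing R] {A : Type*} [NonUnitalRing A]
    [Module R A]
    (B : NonUnitalSubalgebra R A)
    (hcomm : ∀ x ∈ B, ∀ y ∈ B, x * y = y * x)
    (hlu : QCP.HasLocalUnits B)
    (e n k : A) (he : QCP.IsIdem B e) (hk : QCP.IsDagger B n k) :
    QCP.IsDagger B (n - n * e) (k - e * k) ∧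
      QCP.IsDagger B (n - e * n) (k - k * e) ∧
      QCP.IsIdem B (k * n - k * n * e) ∧
      n - n * e = n * (k * n - k * n * e) ∧
      QCP.NormLE B (n - n * e) n ∧
      QCP.NormLE B (n - e * n) n := by
  have hkn : QCP.IsIdem B (k * n) :=
    ⟨hk.mul_mem_of_hasLocalUnits hlu, hk.isIdempotentElem_mul⟩
  have hnk : QCP.IsIdem B (n * k) :=
    ⟨hk.symm.mul_mem_of_hasLocalUnits hlu, hk.symm.isIdempotentElem_mul⟩
  have hf := QCP.isIdem_sub_mul hkn he (hcomm _ hkn.1 _ he.1)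
  have hg := QCP.isIdem_sub_mul hnk he (hcomm _ hnk.1 _ he.1)
  have hnf : n * (k * n - k * n * e) = n - n * e := by
    simp only [mul_sub, ← mul_assoc, hk.2.1]
  have hfk : (k * n - k * n * e) * k = k - e * k := by
    rw [sub_mul, hcomm _ hkn.1 _ he.1, hk.1, mul_assoc e, hk.1]
  have hkg : k * (n * k - n * k * e) = k - k * e := by
    simp only [mul_sub, ← mul_assoc, hk.1]
  have hgn : (n * k - n * k * e) * n = n - e * n := by
    rw [sub_mul, hcomm _ hnk.1 _ he.1, hk.2.1, mul_assoc e, hk.2.1]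
  have hfc := hcomm _ hf.1 _ hkn.1
  have hgc := hcomm _ hg.1 _ hnk.1
  refine ⟨?_, ?_, hf, hnf.symm, ?_, ?_⟩
  · simpa only [hnf, hfk] using hk.mul_idem hf hfc
  · simpa only [hgn, hkg] using hk.idem_mul hg hgc
  · simpa only [hnf] using QCP.normLE_mul_idem (n := n) hf
  · simpa only [hgn] using hk.normLE_idem_mul hg hgc

/-- `n − n·e` and `n − e·n` are normalisers with the indicated daggers,
and they lie below `n`. -/
theorem normaliser_sub_mul_idem {R : Type*} [CommRing R] {A : Type*} [NonUnitalRing A]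
    [Module R A] [SMulCommClass R A A] [IsScalarTower R A A]
    (B : NonUnitalSubalgebra R A)
    (hcomm : ∀ x ∈ B, ∀ y ∈ B, x * y = y * x)
    (hWT : QCP.CondWT B)
    (hlu : QCP.HasLocalUnits B)
    (e n k : A) (he : QCP.IsIdem B e) (hk : QCP.IsDagger B n k) :
    QCP.IsDagger B (n - n * e) (k - e * k) ∧
      QCP.IsDagger B (n - e * n) (k - k * e) ∧
      QCP.IsIdem B (k * n - k * n * e) ∧
      n - n * e = n * (k * n - k * n * e) ∧
      QCP.NormLE B (n - n * e) n ∧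
      QCP.NormLE B (n - e * n) n :=
  normaliser_sub_mul_idem_general B hcomm hlu e n k he hk
end

section
/- Let (A,B) be an algebraic quasi-Cartan pair and let P : A → B be a conditional expectation that is implemented by idempotents. Then for every n ∈ N(B), the set {e ∈ I(B) : e·(n†·n) = e and n·e ∈ B} has a maximum element e(n) with respect to the order on idempotents (e ≤ f iff e·f = e), and P(n) = n·e(n) = e(n)·n. -/
/-!
Put `d := n†n ∈ I(B)` and let `f ∈ I(B)` implement `P` at `n`, so `P(n) = n·f = f·n`. The
maximum is `e(n) := d·f`: it is an idempotent below `d` with `n·e(n) = n·n†·n·f = P(n)`, and if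
`e ≤ d` with `n·e ∈ B`, then `n·e = P(n·e) = P(n)·e = n·f·e`, whence `e = d·e = n†·n·f·e = e(n)·e`.
-/

namespace QCP

variable {R : Type*} [CommRing R] {A : Type*} [NonUnitalRing A] [Module R A]
  {B : NonUnitalSubalgebra R A}

theorem IsIdem.mul {e f : A} (he : IsIdem B e) (hf : IsIdem B f) (hef : e * f = f * e) :
    IsIdem B (e * f) := by
  refine ⟨mul_mem he.1 hf.1, ?_⟩
  calc e * f * (e * f) = e * (f * e) * f := by simp only [mul_assoc]
    _ = e * e * (f * f) := by rw [← hef]; simp only [mul_assoc]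
    _ = e * f := by rw [he.2, hf.2]

theorem IsDagger.isIdem_mul {n k : A} (hLU : HasLocalUnits B) (hk : IsDagger B n k) :
    IsIdem B (k * n) := by
  classical
  obtain ⟨e, he, hunit⟩ := hLU {k}
  have hmem : k * e * n ∈ B := (hk.2.2 e he.1).1
  rw [(hunit k (Finset.mem_singleton_self k)).2] at hmem
  exact ⟨hmem, by rw [← mul_assoc, hk.1]⟩

theorem IsCondExp.map_mul_of_mem_right {P : A →ₗ[R] A} (hLU : HasLocalUnits B)
    (hP : IsCondExp B P) (a : A) {b : A} (hb : b ∈ B) : P (a * b) = P a * b := by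
  classical
  obtain ⟨e, he, hunit⟩ := hLU {a}
  obtain ⟨hea, hae⟩ := hunit a (Finset.mem_singleton_self a)
  have hPa : P a = e * P a * e := by
    conv_lhs => rw [← hae, ← hea]
    exact hP.2.2 a e he.1 e he.1
  have hePa : e * P a = P a := by
    conv_lhs => rw [hPa]
    simp only [← mul_assoc, he.2]
    exact hPa.symm
  calc P (a * b) = P (e * a * b) := by rw [hea]
    _ = P a * b := by rw [hP.2.2 a e he.1 b hb, hePa]

end QCP

theorem expectation_via_max_idem_general {R : Type*} [CommRing R] {A : Type*} [NonUnitalRing A]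
    [Module R A]
    (B : NonUnitalSubalgebra R A)
    (hQC : QCP.IsQuasiCartanPair B)
    (P : A →ₗ[R] A) (hP : QCP.IsCondExp B P) (hPi : QCP.ImplementedByIdem B P)
    (n k : A) (hk : QCP.IsDagger B n k) :
    ∃ en : A, QCP.IsIdem B en ∧ en * (k * n) = en ∧ n * en ∈ B ∧
      (∀ e : A, QCP.IsIdem B e → e * (k * n) = e → n * e ∈ B → e * en = e) ∧
      P n = n * en ∧ P n = en * n := by
  obtain ⟨hcomm, -, hLU, -⟩ := hQC.1
  obtain ⟨f, hf, hPnf, hPfn⟩ := hPi n ⟨k, hk⟩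
  have hd : QCP.IsIdem B (k * n) := hk.isIdem_mul hLU
  have hdf : k * n * f = f * (k * n) := hcomm _ hd.1 _ hf.1
  have hnen : P n = n * (k * n * f) := by rw [hPnf, ← mul_assoc, ← mul_assoc, hk.2.1]
  refine ⟨k * n * f, hd.mul hf hdf, ?_, hnen ▸ hP.1 n, ?_, hnen, ?_⟩
  · rw [mul_assoc, ← hdf, ← mul_assoc, hd.2]
  · intro e he hed hne
    have hnfe : n * e = n * f * e := by
      rw [← hP.2.1 _ hne, hP.map_mul_of_mem_right hLU n he.1, hPnf]
    calc e * (k * n * f) = k * (n * f * e) := by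
          rw [hcomm _ he.1 _ (mul_mem hd.1 hf.1)]; simp only [mul_assoc]
      _ = e * (k * n) := by rw [← hnfe, ← mul_assoc, hcomm _ hd.1 _ he.1]
      _ = e := hed
  · calc P n = k * n * P n := by
          rw [hcomm _ hd.1 _ (hP.1 n), hPfn, mul_assoc, ← mul_assoc n, hk.2.1]
      _ = k * n * f * n := by rw [hPfn]; simp only [mul_assoc]

/-- for a quasi-Cartan pair with conditional expectation `P` implemented by
idempotents, the set `{e ∈ I(B) : e ≤ n†·n and n·e ∈ B}` has a maximum `e(n)`, and
`P(n) = n·e(n) = e(n)·n`. -/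
theorem expectation_via_max_idem {R : Type*} [CommRing R] {A : Type*} [NonUnitalRing A]
    [Module R A] [SMulCommClass R A A] [IsScalarTower R A A]
    (B : NonUnitalSubalgebra R A)
    (hQC : QCP.IsQuasiCartanPair B)
    (P : A →ₗ[R] A) (hP : QCP.IsCondExp B P) (hPi : QCP.ImplementedByIdem B P)
    (n k : A) (hk : QCP.IsDagger B n k) :
    ∃ en : A, QCP.IsIdem B en ∧ en * (k * n) = en ∧ n * en ∈ B ∧
      (∀ e : A, QCP.IsIdem B e → e * (k * n) = e → n * e ∈ B → e * en = e) ∧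
      P n = n * en ∧ P n = en * n :=
  expectation_via_max_idem_general B hQC P hP hPi n k hk
end

section
/- Let (A,B) be an algebraic quasi-Cartan pair. Then there is a unique conditional expectation from A to B that is implemented by idempotents: if P₁ and P₂ are conditional expectations A → B both implemented by idempotents, then P₁ = P₂. -/
/-!
If `P n = n e₁` and `Q n = n e₂` for a normaliser `n`, then applying `Q` to `P n ∈ B` and pulling
the idempotent out gives `n e₁ = n e₂ e₁`; symmetrically `n e₂ = n e₁ e₂`, and commutativity of `B`
makes the two agree. Two linear maps agreeing on the spanning set `N(B)` are equal.
-/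

namespace QCP

variable {R : Type*} [CommRing R] {A : Type*} [NonUnitalRing A] [Module R A]
  {B : NonUnitalSubalgebra R A} {P Q : A →ₗ[R] A}

/-- Without a unit, `b * a * b'` needs a left factor from `B`: a local unit for `a` and `P a`
supplies it. -/
theorem IsCondExp.map_mul_right (hLU : HasLocalUnits B) (hP : IsCondExp B P) (a : A)
    {b : A} (hb : b ∈ B) : P (a * b) = P a * b := by
  classical
  obtain ⟨f, ⟨hfB, -⟩, hf⟩ := hLU {a, P a}
  have hfa : f * a = a := (hf a (by simp)).1
  have hfPa : f * P a = P a := (hf (P a) (by simp)).1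
  calc P (a * b) = P (f * a * b) := by rw [hfa]
    _ = f * P a * b := hP.2.2 a f hfB b hb
    _ = P a * b := by rw [hfPa]

theorem IsCondExp.eq_mul_of_eq_mul (hLU : HasLocalUnits B) (hP : IsCondExp B P)
    (hQ : IsCondExp B Q) {a e : A} (he : e ∈ B) (hPa : P a = a * e) : P a = Q a * e :=
  calc P a = Q (P a) := (hQ.2.1 _ (hP.1 a)).symm
    _ = Q a * e := by rw [hPa, hQ.map_mul_right hLU a he]

theorem eq_of_implementedByIdem (hcomm : ∀ x ∈ B, ∀ y ∈ B, x * y = y * x)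
    (hLU : HasLocalUnits B) (hP : IsCondExp B P) (hPi : ImplementedByIdem B P)
    (hQ : IsCondExp B Q) (hQi : ImplementedByIdem B Q) {n : A} (hn : MemNormaliser B n) :
    P n = Q n := by
  obtain ⟨e₁, ⟨he₁, -⟩, hPn, -⟩ := hPi n hn
  obtain ⟨e₂, ⟨he₂, -⟩, hQn, -⟩ := hQi n hn
  calc P n = Q n * e₁ := hP.eq_mul_of_eq_mul hLU hQ he₁ hPn
    _ = n * e₁ * e₂ := by rw [hQn, mul_assoc, hcomm e₂ he₂ e₁ he₁, ← mul_assoc]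
    _ = Q n := by rw [← hPn, ← hQ.eq_mul_of_eq_mul hLU hP he₂ hQn]

end QCP

theorem unique_expectation_implemented_by_idem_general {R : Type*} [CommRing R] {A : Type*}
    [NonUnitalRing A] [Module R A]
    (B : NonUnitalSubalgebra R A)
    (hQC : QCP.IsQuasiCartanPair B)
    (P₁ P₂ : A →ₗ[R] A)
    (hP₁ : QCP.IsCondExp B P₁) (hP₁i : QCP.ImplementedByIdem B P₁)
    (hP₂ : QCP.IsCondExp B P₂) (hP₂i : QCP.ImplementedByIdem B P₂) :
    P₁ = P₂ := by
  obtain ⟨⟨hcomm, -, hLU, -, hspan, -⟩, -⟩ := hQC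
  exact LinearMap.ext_on hspan fun n hn ↦
    QCP.eq_of_implementedByIdem hcomm hLU hP₁ hP₁i hP₂ hP₂i hn

/-- a quasi-Cartan pair has a unique conditional expectation that is
implemented by idempotents. -/
theorem unique_expectation_implemented_by_idem {R : Type*} [CommRing R] {A : Type*}
    [NonUnitalRing A] [Module R A] [SMulCommClass R A A] [IsScalarTower R A A]
    (B : NonUnitalSubalgebra R A)
    (hQC : QCP.IsQuasiCartanPair B)
    (P₁ P₂ : A →ₗ[R] A)
    (hP₁ : QCP.IsCondExp B P₁) (hP₁i : QCP.ImplementedByIdem B P₁)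
    (hP₂ : QCP.IsCondExp B P₂) (hP₂i : QCP.ImplementedByIdem B P₂) :
    P₁ = P₂ :=
  unique_expectation_implemented_by_idem_general B hQC P₁ P₂ hP₁ hP₁i hP₂ hP₂i
end

section
/- Let (A,B) be an algebraic quasi-Cartan pair. If n ∈ N(B) ∩ B, then n† ∈ B. -/
namespace QCP

variable {R : Type*} [CommRing R] {A : Type*} [NonUnitalRing A] [Module R A]
  {B : NonUnitalSubalgebra R A} {n k e : A}

theorem IsDagger.dagger_mul_mem (hk : IsDagger B n k) (he : e ∈ B) (hke : k * e = k) :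
    k * n ∈ B := by
  simpa only [hke] using (hk.2.2 e he).1

theorem IsDagger.mul_dagger_mem (hk : IsDagger B n k) (he : e ∈ B) (hne : n * e = n) :
    n * k ∈ B := by
  simpa only [hne] using (hk.2.2 e he).2

end QCP

theorem dagger_mem_of_mem_general {R : Type*} [CommRing R] {A : Type*}
    [NonUnitalRing A] [Module R A]
    (B : NonUnitalSubalgebra R A)
    (hQC : QCP.IsQuasiCartanPair B)
    (n k : A) (hnB : n ∈ B) (hk : QCP.IsDagger B n k) :
    k ∈ B := by
  classical
  obtain ⟨⟨-, -, hLU, -⟩, P, ⟨hPB, hPid, hPbimod⟩, -, -⟩ := hQC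
  obtain ⟨e, ⟨heB, -⟩, he⟩ := hLU {n, k}
  have hne : n * e = n := (he n (by simp)).2
  have hek : e * k = k := (he k (by simp)).1
  have hke : k * e = k := (he k (by simp)).2
  have hkn : k * n = e * P k * n :=
    calc k * n = P (k * n) := (hPid _ (hk.dagger_mul_mem heB hke)).symm
      _ = P (e * k * n) := by rw [hek]
      _ = e * P k * n := hPbimod k e heB n hnB
  rw [← hk.1, hkn, mul_assoc]
  exact mul_mem (mul_mem heB (hPB k)) (hk.mul_dagger_mem heB hne)

/-- in a quasi-Cartan pair, if `n ∈ N(B) ∩ B` then `n† ∈ B`. -/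
theorem dagger_mem_of_mem {R : Type*} [CommRing R] {A : Type*}
    [NonUnitalRing A] [Module R A] [SMulCommClass R A A] [IsScalarTower R A A]
    (B : NonUnitalSubalgebra R A)
    (hQC : QCP.IsQuasiCartanPair B)
    (n k : A) (hnB : n ∈ B) (hk : QCP.IsDagger B n k) :
    k ∈ B :=
  dagger_mem_of_mem_general B hQC n k hnB hk
end
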